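/- Let τ, τ₁, ζ be complex numbers with Im τ > 0, and set q = e^{2πiτ}, q₁ = e^{2πiτ₁}, z = e^{2πiζ}. Then ∏_{i=1}^∞ (1 + q^{2i−1} q₁ z^{−2})(1 + q^{2i−1} q₁^{−1} z²) = (e^{πiτ/6} / η(2τ)) · ϑ_{0,0}(2ζ − τ₁, 2τ). -/

import Mathlib

/-- The theta function with characteristic `(a, b)`:
`ϑ_{a,b}(ζ,τ) = Σ_{n∈ℤ} exp(πi(n+a)²τ)·exp(2πi(n+a)(ζ+b))`. -/
noncomputable def jTheta (a b : ℝ) (ζ τ : ℂ) : ℂ :=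
  ∑' n : ℤ, Complex.exp (Real.pi * Complex.I * ((n : ℂ) + (a : ℂ)) ^ 2 * τ) *
    Complex.exp (2 * Real.pi * Complex.I * ((n : ℂ) + (a : ℂ)) * (ζ + (b : ℂ)))

/-- The Dedekind eta function `η(τ) = e^{πiτ/12} ∏_{m=1}^∞ (1 − e^{2πiτm})`. -/
noncomputable def dedekindEta (τ : ℂ) : ℂ :=
  Complex.exp (Real.pi * Complex.I * τ / 12) *
    ∏' m : ℕ, (1 - Complex.exp (2 * Real.pi * Complex.I * τ * ((m : ℂ) + 1)))

/-!
With `q = e^{2πiτ}` and `x = q₁⁻¹ z² = e^{2πi(2ζ - τ₁)}` the product is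
`∏ (1 + q^{2i+1} x)(1 + q^{2i+1} x⁻¹)`, so the claim is the Jacobi triple product
`∏ (1 + q^{2i+1} x)(1 + q^{2i+1} x⁻¹) = ϑ₀₀(2ζ - τ₁, 2τ) / ∏ (1 - q^{2k})`
together with `η(2τ) = e^{πiτ/6} ∏ (1 - q^{2k})`.

The triple product is proved by truncation. Cauchy's `q`-binomial theorem with base `q²`, applied
to the `2m` factors `1 + x q^{2k+1-2m}`, expands the product over `i < m` as
`∑_{|n| ≤ m} [2m, m+n]_{q²} q^{n²} xⁿ`. The Gaussian binomials are quotients of finite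
`q`-Pochhammer products, so they are bounded uniformly in `m, n` and converge to
`1 / ∏ (1 - q^{2k})` as `m → ∞`; dominated convergence (Tannery's theorem) then passes to the
limit.
-/

open Finset Filter Topology

section QBinomial

variable {R : Type*} [CommRing R] (p : R)

def qPochhammer (n : ℕ) : R := ∏ k ∈ range n, (1 - p ^ (k + 1))

def qBinomial : ℕ → ℕ → R
  | _, 0 => 1
  | 0, _ + 1 => 0
  | n + 1, k + 1 => qBinomial n k + p ^ (k + 1) * qBinomial n (k + 1)

@[simp] lemma qBinomial_zero_right (n : ℕ) : qBinomial p n 0 = 1 := by cases n <;> rfl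

lemma qBinomial_succ_succ (n k : ℕ) :
    qBinomial p (n + 1) (k + 1) = qBinomial p n k + p ^ (k + 1) * qBinomial p n (k + 1) := rfl

lemma qBinomial_eq_zero_of_lt : ∀ {n k : ℕ}, n < k → qBinomial p n k = 0
  | 0, _ + 1, _ => rfl
  | n + 1, k + 1, h => by
    rw [qBinomial_succ_succ, qBinomial_eq_zero_of_lt (by omega),
      qBinomial_eq_zero_of_lt (by omega), mul_zero, add_zero]

@[simp] lemma qBinomial_self : ∀ n : ℕ, qBinomial p n n = 1
  | 0 => rfl
  | n + 1 => by
    rw [qBinomial_succ_succ, qBinomial_self n, qBinomial_eq_zero_of_lt p n.lt_succ_self,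
      mul_zero, add_zero]

lemma qPochhammer_succ (n : ℕ) : qPochhammer p (n + 1) = qPochhammer p n * (1 - p ^ (n + 1)) :=
  prod_range_succ _ n

lemma qBinomial_mul_qPochhammer_mul : ∀ {n k : ℕ}, k ≤ n →
    qBinomial p n k * qPochhammer p k * qPochhammer p (n - k) = qPochhammer p n
  | n, 0, _ => by simp [qPochhammer]
  | n + 1, k + 1, h => by
    obtain rfl | hk := eq_or_lt_of_le (Nat.le_of_succ_le_succ h)
    · simp [qPochhammer]
    have h₁ := qBinomial_mul_qPochhammer_mul (n := n) (k := k) (by omega)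
    have h₂ := qBinomial_mul_qPochhammer_mul (n := n) (k := k + 1) hk
    obtain ⟨d, rfl⟩ : ∃ d, n = k + 1 + d := ⟨n - (k + 1), by omega⟩
    simp only [show k + 1 + d - k = d + 1 by omega, show k + 1 + d - (k + 1) = d by omega,
      show k + 1 + d + 1 - (k + 1) = d + 1 by omega] at h₁ h₂ ⊢
    rw [qPochhammer_succ p k] at h₂
    rw [qPochhammer_succ p d] at h₁
    rw [qBinomial_succ_succ, qPochhammer_succ p (k + 1 + d), qPochhammer_succ p k,
      qPochhammer_succ p d]
    linear_combination (1 - p ^ (k + 1)) * h₁ + p ^ (k + 1) * (1 - p ^ (d + 1)) * h₂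

/-- Cauchy's `q`-binomial theorem. -/
theorem prod_one_add_mul_pow_eq_sum (y : R) (n : ℕ) :
    ∏ k ∈ range n, (1 + y * p ^ k) =
      ∑ j ∈ range (n + 1), p ^ j.choose 2 * qBinomial p n j * y ^ j := by
  induction n generalizing y with
  | zero => simp
  | succ n ih =>
    have hshift : ∏ k ∈ range n, (1 + y * p ^ (k + 1)) =
        ∑ j ∈ range (n + 1), p ^ (j.choose 2 + j) * qBinomial p n j * y ^ j := by
      simp only [pow_succ', ← mul_assoc, ih, mul_pow, pow_add]
      exact sum_congr rfl fun j _ => by ring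
    set f : ℕ → R := fun j => p ^ (j.choose 2 + j) * qBinomial p n j * y ^ j
    have hf : ∑ j ∈ range (n + 1), f j = ∑ j ∈ range (n + 1), f (j + 1) + 1 := by
      have h0 : f 0 = 1 := by simp [f]
      have hlast : f (n + 1) = 0 := by simp [f, qBinomial_eq_zero_of_lt p (Nat.lt_succ_self n)]
      rw [← h0, ← sum_range_succ', sum_range_succ f (n + 1), hlast, add_zero]
    rw [prod_range_succ', hshift]
    calc (∑ j ∈ range (n + 1), f j) * (1 + y * p ^ 0)
        = ∑ j ∈ range (n + 1), f (j + 1) + ∑ j ∈ range (n + 1), f j * y + 1 := by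
          rw [pow_zero, mul_one, mul_add, mul_one, sum_mul, hf]; ring
      _ = ∑ j ∈ range (n + 1), p ^ (j + 1).choose 2 * qBinomial p (n + 1) (j + 1) * y ^ (j + 1)
            + 1 := by
          rw [← sum_add_distrib]
          congr 1
          refine sum_congr rfl fun j _ => ?_
          simp only [f, qBinomial_succ_succ, Nat.choose_succ_succ', Nat.choose_one_right]
          ring
      _ = _ := by rw [sum_range_succ' _ (n + 1)]; simp

end QBinomial

section FiniteTripleProduct

variable {K : Type*} [Field K] {q x : K}

/-- The `k`-th factor on the left is `1 + x q^{2k+1-2m}`; going from `m` to `m + 1` adds the outer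
pair `k = 0` and `k = 2m + 1`, which is the pair `i = m` on the right up to the factor `x q^{-2m-1}`. -/
lemma pow_mul_prod_range_two_mul (hq : q ≠ 0) (hx : x ≠ 0) (m : ℕ) :
    q ^ m ^ 2 * ∏ k ∈ range (2 * m), (1 + x * q / q ^ (2 * m) * (q ^ 2) ^ k) =
      x ^ m * ∏ i ∈ range m, ((1 + q ^ (2 * i + 1) * x) * (1 + q ^ (2 * i + 1) * x⁻¹)) := by
  induction m with
  | zero => simp
  | succ m ih =>
    have hshift (k : ℕ) : x * q / q ^ (2 * m + 1 + 1) * (q ^ 2) ^ (k + 1) =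
        x * q / q ^ (2 * m) * (q ^ 2) ^ k := by
      field_simp; ring
    rw [show 2 * (m + 1) = 2 * m + 1 + 1 by ring, prod_range_succ', prod_range_succ]
    simp only [hshift]
    rw [prod_range_succ]
    have hends : q ^ (2 * m + 1) * (1 + x * q / q ^ (2 * m) * (q ^ 2) ^ (2 * m)) *
        (1 + x * q / q ^ (2 * m + 1 + 1) * (q ^ 2) ^ 0) =
          x * ((1 + q ^ (2 * m + 1) * x) * (1 + q ^ (2 * m + 1) * x⁻¹)) := by
      field_simp
      ring
    linear_combination (q ^ (2 * m + 1) * (1 + x * q / q ^ (2 * m) * (q ^ 2) ^ (2 * m)) *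
        (1 + x * q / q ^ (2 * m + 1 + 1) * (q ^ 2) ^ 0)) * ih +
      x ^ m * (∏ i ∈ range m, ((1 + q ^ (2 * i + 1) * x) * (1 + q ^ (2 * i + 1) * x⁻¹))) *
        hends

lemma two_mul_choose_two_add_self (j : ℕ) : 2 * j.choose 2 + j = j * j := by
  induction j with
  | zero => rfl
  | succ j ih => rw [Nat.choose_succ_succ', Nat.choose_one_right]; linarith

lemma zpow_sq_mul_zpow_mul_pow (hq : q ≠ 0) (hx : x ≠ 0) (j m : ℕ) :
    q ^ (((j : ℤ) - m) ^ 2) * x ^ ((j : ℤ) - m) * x ^ m =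
      q ^ m ^ 2 * ((q ^ 2) ^ j.choose 2 * (x * q / q ^ (2 * m)) ^ j) := by
  have hexp : ((j : ℤ) - m) ^ 2 = ((m ^ 2 + j * j : ℕ) : ℤ) - ((2 * m * j : ℕ) : ℤ) := by
    push_cast; ring
  rw [hexp, zpow_sub₀ hq, zpow_sub₀ hx]
  simp only [zpow_natCast]
  rw [div_pow, mul_pow, ← pow_mul, ← pow_mul, pow_add q (m ^ 2),
    ← two_mul_choose_two_add_self j]
  field_simp
  ring

theorem prod_range_jacobi_triple (hq : q ≠ 0) (hx : x ≠ 0) (m : ℕ) :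
    ∏ i ∈ range m, ((1 + q ^ (2 * i + 1) * x) * (1 + q ^ (2 * i + 1) * x⁻¹)) =
      ∑ n ∈ Icc (-(m : ℤ)) m,
        qBinomial (q ^ 2) (2 * m) (n + m).toNat * (q ^ (n ^ 2) * x ^ n) := by
  have h := pow_mul_prod_range_two_mul hq hx m
  rw [prod_one_add_mul_pow_eq_sum, mul_sum] at h
  refine mul_right_cancel₀ (pow_ne_zero m hx) ?_
  rw [mul_comm _ (x ^ m), ← h, sum_mul]
  refine sum_nbij' (fun j : ℕ => (j : ℤ) - m) (fun n => (n + m).toNat) ?_ ?_ ?_ ?_ ?_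
  · intro j hj; simp only [mem_range, mem_Icc] at hj ⊢; omega
  · intro n hn; simp only [mem_range, mem_Icc] at hn ⊢; omega
  · intro j _; simp
  · intro n hn; simp only [mem_Icc] at hn; omega
  · intro j _
    rw [sub_add_cancel, Int.toNat_natCast, mul_assoc, mul_assoc, zpow_sq_mul_zpow_mul_pow hq hx]
    ring

end FiniteTripleProduct

section Analytic

variable {𝕜 : Type*} [NormedField 𝕜] {p : 𝕜}

lemma summable_norm_pow_succ (hp : ‖p‖ < 1) : Summable fun k : ℕ => ‖p ^ (k + 1)‖ := by
  simpa only [norm_pow] using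
    (summable_nat_add_iff 1).mpr (summable_geometric_of_lt_one (norm_nonneg p) hp)

lemma one_sub_pow_succ_ne_zero (hp : ‖p‖ < 1) (k : ℕ) : 1 - p ^ (k + 1) ≠ 0 := by
  refine sub_ne_zero.mpr fun h => ?_
  have : ‖p ^ (k + 1)‖ < 1 := by
    rw [norm_pow]; exact pow_lt_one₀ (norm_nonneg p) hp k.succ_ne_zero
  rw [← h, norm_one] at this
  exact this.false

lemma multipliable_one_sub_pow_succ [CompleteSpace 𝕜] (hp : ‖p‖ < 1) :
    Multipliable fun k : ℕ => 1 - p ^ (k + 1) := by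
  simpa only [sub_eq_add_neg] using
    multipliable_one_add_of_summable (f := fun k : ℕ => -p ^ (k + 1))
      (by simpa only [norm_neg] using summable_norm_pow_succ hp)

lemma tprod_one_sub_pow_succ_ne_zero [CompleteSpace 𝕜] (hp : ‖p‖ < 1) :
    ∏' k : ℕ, (1 - p ^ (k + 1)) ≠ 0 := by
  simpa only [sub_eq_add_neg] using
    tprod_one_add_ne_zero_of_summable (f := fun k : ℕ => -p ^ (k + 1))
      (by simpa only [← sub_eq_add_neg] using one_sub_pow_succ_ne_zero hp)
      (by simpa only [norm_neg] using summable_norm_pow_succ hp)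

lemma tendsto_qPochhammer [CompleteSpace 𝕜] (hp : ‖p‖ < 1) :
    Tendsto (qPochhammer p) atTop (𝓝 (∏' k : ℕ, (1 - p ^ (k + 1)))) :=
  (multipliable_one_sub_pow_succ hp).hasProd.tendsto_prod_nat

lemma tprod_one_sub_pow_succ_le_qPochhammer {r : ℝ} (hr₀ : 0 ≤ r) (hr : r < 1) (n : ℕ) :
    ∏' k : ℕ, (1 - r ^ (k + 1)) ≤ qPochhammer r n := by
  refine Antitone.le_of_tendsto (antitone_nat_of_succ_le fun n => ?_)
    (tendsto_qPochhammer (by rwa [Real.norm_of_nonneg hr₀])) n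
  rw [qPochhammer_succ]
  refine mul_le_of_le_one_right ?_ (sub_le_self _ (by positivity))
  exact prod_nonneg fun k _ => sub_nonneg.mpr (pow_le_one₀ hr₀ hr.le)

lemma tprod_one_sub_pow_succ_pos {r : ℝ} (hr₀ : 0 ≤ r) (hr : r < 1) :
    0 < ∏' k : ℕ, (1 - r ^ (k + 1)) :=
  (tprod_nonneg fun _ => sub_nonneg.mpr (pow_le_one₀ hr₀ hr.le)).lt_of_ne
    (tprod_one_sub_pow_succ_ne_zero (by rwa [Real.norm_of_nonneg hr₀])).symm

lemma qPochhammer_norm_le_norm_qPochhammer (hp : ‖p‖ ≤ 1) (n : ℕ) :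
    qPochhammer ‖p‖ n ≤ ‖qPochhammer p n‖ := by
  rw [qPochhammer, qPochhammer, norm_prod]
  refine prod_le_prod (fun k _ => sub_nonneg.mpr (pow_le_one₀ (norm_nonneg p) hp)) fun k _ => ?_
  simpa only [norm_one, norm_pow] using norm_sub_norm_le (1 : 𝕜) (p ^ (k + 1))

lemma norm_qPochhammer_le (hp : ‖p‖ < 1) (n : ℕ) :
    ‖qPochhammer p n‖ ≤ Real.exp (∑' k : ℕ, ‖p ^ (k + 1)‖) := by
  rw [qPochhammer, norm_prod]
  calc ∏ k ∈ range n, ‖1 - p ^ (k + 1)‖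
      ≤ ∏ k ∈ range n, Real.exp ‖p ^ (k + 1)‖ := by
        refine prod_le_prod (fun _ _ => norm_nonneg _) fun k _ => ?_
        calc ‖1 - p ^ (k + 1)‖ ≤ ‖p ^ (k + 1)‖ + 1 := by
              simpa only [norm_one, add_comm] using norm_sub_le (1 : 𝕜) (p ^ (k + 1))
          _ ≤ _ := Real.add_one_le_exp _
    _ = Real.exp (∑ k ∈ range n, ‖p ^ (k + 1)‖) := (Real.exp_sum _ _).symm
    _ ≤ _ := Real.exp_le_exp.mpr <|
        (summable_norm_pow_succ hp).sum_le_tsum _ fun _ _ => norm_nonneg _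

lemma qPochhammer_ne_zero (hp : ‖p‖ < 1) (n : ℕ) : qPochhammer p n ≠ 0 :=
  prod_ne_zero_iff.mpr fun k _ => one_sub_pow_succ_ne_zero hp k

lemma qBinomial_eq_div (hp : ‖p‖ < 1) {n k : ℕ} (hk : k ≤ n) :
    qBinomial p n k = qPochhammer p n / (qPochhammer p k * qPochhammer p (n - k)) :=
  eq_div_of_mul_eq (mul_ne_zero (qPochhammer_ne_zero hp k) (qPochhammer_ne_zero hp (n - k)))
    (by rw [← mul_assoc, qBinomial_mul_qPochhammer_mul p hk])

lemma exists_forall_norm_qBinomial_le (hp : ‖p‖ < 1) :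
    ∃ C, ∀ n k, ‖qBinomial p n k‖ ≤ C := by
  set c := ∏' k : ℕ, (1 - ‖p‖ ^ (k + 1))
  have hc : 0 < c := tprod_one_sub_pow_succ_pos (norm_nonneg p) hp
  have hlow (n : ℕ) : c ≤ ‖qPochhammer p n‖ :=
    (tprod_one_sub_pow_succ_le_qPochhammer (norm_nonneg p) hp n).trans
      (qPochhammer_norm_le_norm_qPochhammer hp.le n)
  refine ⟨Real.exp (∑' k : ℕ, ‖p ^ (k + 1)‖) / (c * c), fun n k => ?_⟩
  obtain hk | hk := le_or_gt k n
  · rw [qBinomial_eq_div hp hk, norm_div, norm_mul]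
    exact div_le_div₀ (Real.exp_nonneg _) (norm_qPochhammer_le hp n) (mul_pos hc hc)
      (mul_le_mul (hlow k) (hlow (n - k)) hc.le (norm_nonneg _))
  · rw [qBinomial_eq_zero_of_lt p hk, norm_zero]
    positivity

lemma tendsto_qBinomial_add [CompleteSpace 𝕜] (hp : ‖p‖ < 1) {ι : Type*} {l : Filter ι}
    {a b : ι → ℕ} (ha : Tendsto a l atTop) (hb : Tendsto b l atTop) :
    Tendsto (fun i => qBinomial p (a i + b i) (a i)) l
      (𝓝 (∏' k : ℕ, (1 - p ^ (k + 1)))⁻¹) := by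
  have hP := tprod_one_sub_pow_succ_ne_zero hp
  have hab : Tendsto (fun i => a i + b i) l atTop :=
    tendsto_atTop_mono (fun i => Nat.le_add_right _ _) ha
  have hlim := ((tendsto_qPochhammer hp).comp hab).div
    (((tendsto_qPochhammer hp).comp ha).mul ((tendsto_qPochhammer hp).comp hb)) (mul_ne_zero hP hP)
  rw [div_mul_cancel_left₀ hP] at hlim
  refine hlim.congr fun i => ?_
  rw [qBinomial_eq_div hp (Nat.le_add_right _ _), Nat.add_sub_cancel_left]
  rfl

end Analytic

section TripleProduct

variable {𝕜 : Type*} [NormedField 𝕜] [CompleteSpace 𝕜] {q x : 𝕜}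

lemma multipliable_one_add_pow_two_mul_add_one_mul (hq : ‖q‖ < 1) (y : 𝕜) :
    Multipliable fun i : ℕ => 1 + q ^ (2 * i + 1) * y := by
  refine multipliable_one_add_of_summable ?_
  have hq2 : ‖q‖ ^ 2 < 1 := pow_lt_one₀ (norm_nonneg q) hq two_ne_zero
  refine ((summable_geometric_of_lt_one (by positivity) hq2).mul_left (‖q‖ * ‖y‖)).congr
    fun i => ?_
  rw [norm_mul, norm_pow, pow_succ ‖q‖ (2 * i), pow_mul]
  ring

theorem tprod_jacobi_triple (hq₀ : q ≠ 0) (hq : ‖q‖ < 1) (hx : x ≠ 0)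
    (hs : Summable fun n : ℤ => ‖q ^ (n ^ 2) * x ^ n‖) :
    ∏' i : ℕ, ((1 + q ^ (2 * i + 1) * x) * (1 + q ^ (2 * i + 1) * x⁻¹)) =
      (∑' n : ℤ, q ^ (n ^ 2) * x ^ n) / ∏' k : ℕ, (1 - (q ^ 2) ^ (k + 1)) := by
  have hq2 : ‖q ^ 2‖ < 1 := by rw [norm_pow]; exact pow_lt_one₀ (norm_nonneg q) hq two_ne_zero
  set F : ℕ → ℤ → 𝕜 := fun m => (↑(Icc (-(m : ℤ)) m) : Set ℤ).indicator fun n =>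
    qBinomial (q ^ 2) (2 * m) (n + m).toNat * (q ^ (n ^ 2) * x ^ n)
  have hpartial (m : ℕ) :
      ∏ i ∈ range m, ((1 + q ^ (2 * i + 1) * x) * (1 + q ^ (2 * i + 1) * x⁻¹)) =
        ∑' n, F m n := by
    rw [prod_range_jacobi_triple hq₀ hx, sum_eq_tsum_indicator]
  obtain ⟨C, hC⟩ := exists_forall_norm_qBinomial_le hq2
  have hF_le (m : ℕ) (n : ℤ) : ‖F m n‖ ≤ C * ‖q ^ (n ^ 2) * x ^ n‖ :=
    (norm_indicator_le_norm_self _ _).trans <| (norm_mul _ _).trans_le <|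
      mul_le_mul_of_nonneg_right (hC _ _) (norm_nonneg _)
  have hF_lim (n : ℤ) : Tendsto (fun m => F m n) atTop
      (𝓝 ((∏' k : ℕ, (1 - (q ^ 2) ^ (k + 1)))⁻¹ * (q ^ (n ^ 2) * x ^ n))) := by
    have ha : Tendsto (fun m : ℕ => (n + m).toNat) atTop atTop :=
      tendsto_atTop_atTop.mpr fun b => ⟨b + n.natAbs, fun m hm => by omega⟩
    have hb : Tendsto (fun m : ℕ => ((m : ℤ) - n).toNat) atTop atTop :=
      tendsto_atTop_atTop.mpr fun b => ⟨b + n.natAbs, fun m hm => by omega⟩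
    refine ((tendsto_qBinomial_add hq2 ha hb).mul_const _).congr' ?_
    filter_upwards [eventually_ge_atTop n.natAbs] with m hm
    rw [show (n + m).toNat + ((m : ℤ) - n).toNat = 2 * m by omega]
    have hn : n ∈ (↑(Icc (-(m : ℤ)) m) : Set ℤ) := by rw [mem_coe, mem_Icc]; omega
    simp only [F, Set.indicator_of_mem hn]
  have hlim := tendsto_tsum_of_dominated_convergence (hs.mul_left C) hF_lim
    (Eventually.of_forall hF_le)
  rw [tsum_mul_left, inv_mul_eq_div] at hlim
  refine tendsto_nhds_unique ?_ hlim
  have hmult := (multipliable_one_add_pow_two_mul_add_one_mul hq x).mul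
    (multipliable_one_add_pow_two_mul_add_one_mul hq x⁻¹)
  exact hmult.hasProd.tendsto_prod_nat.congr hpartial

end TripleProduct

section Theta

open Complex
open scoped Real

lemma jacobiTheta₂_term_eq_zpow (n : ℤ) (w τ : ℂ) :
    jacobiTheta₂_term n w τ = cexp (π * I * τ) ^ (n ^ 2) * cexp (2 * π * I * w) ^ n := by
  rw [jacobiTheta₂_term, ← exp_int_mul, ← exp_int_mul, ← exp_add]
  push_cast
  ring_nf

theorem tprod_jacobi_triple_cexp (w : ℂ) {τ : ℂ} (hτ : 0 < τ.im) :
    ∏' i : ℕ, ((1 + cexp (π * I * τ) ^ (2 * i + 1) * cexp (2 * π * I * w)) *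
      (1 + cexp (π * I * τ) ^ (2 * i + 1) * (cexp (2 * π * I * w))⁻¹)) =
      jacobiTheta₂ w τ / ∏' k : ℕ, (1 - (cexp (π * I * τ) ^ 2) ^ (k + 1)) := by
  have hq : ‖cexp (π * I * τ)‖ < 1 := by
    rw [norm_exp, Real.exp_lt_one_iff]
    simpa using mul_pos Real.pi_pos hτ
  have hs :
      Summable fun n : ℤ => ‖cexp (π * I * τ) ^ (n ^ 2) * cexp (2 * π * I * w) ^ n‖ := by
    simpa only [jacobiTheta₂_term_eq_zpow] using
      summable_norm_iff.mpr ((summable_jacobiTheta₂_term_iff w τ).mpr hτ)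
  rw [tprod_jacobi_triple (exp_ne_zero _) hq (exp_ne_zero _) hs, jacobiTheta₂]
  simp only [jacobiTheta₂_term_eq_zpow]

lemma jTheta_zero_zero (ζ τ : ℂ) : jTheta 0 0 ζ τ = jacobiTheta₂ ζ τ := by
  refine tsum_congr fun n => ?_
  rw [jacobiTheta₂_term, ← exp_add]
  push_cast
  ring_nf

lemma dedekindEta_eq (τ : ℂ) :
    dedekindEta τ =
      cexp (π * I * τ / 12) * ∏' k : ℕ, (1 - cexp (2 * π * I * τ) ^ (k + 1)) := by
  rw [dedekindEta]
  congr 1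
  refine tprod_congr fun k => ?_
  rw [← exp_nat_mul]
  push_cast
  ring_nf

end Theta

/-- Theta-function expression of the glued even-index superpotential `W₂′`:
with `q = e^{2πiτ}`, `q₁ = e^{2πiτ₁}`, `z = e^{2πiζ}` and `Im τ > 0`,
`∏_{i=1}^∞ (1 + q^{2i−1} q₁ z⁻²)(1 + q^{2i−1} q₁⁻¹ z²)
  = (e^{πiτ/6}/η(2τ)) · ϑ_{0,0}(2ζ − τ₁, 2τ)`. -/
theorem glued_superpotential_theta_even (τ τ₁ ζ q q₁ z : ℂ) (hτ : 0 < τ.im)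
    (hq : q = Complex.exp (2 * Real.pi * Complex.I * τ))
    (hq₁ : q₁ = Complex.exp (2 * Real.pi * Complex.I * τ₁))
    (hz : z = Complex.exp (2 * Real.pi * Complex.I * ζ)) :
    (∏' i : ℕ, (1 + q ^ (2 * i + 1) * q₁ * (z ^ 2)⁻¹) * (1 + q ^ (2 * i + 1) * q₁⁻¹ * z ^ 2))
      = Complex.exp (Real.pi * Complex.I * τ / 6) / dedekindEta (2 * τ) *
          jTheta 0 0 (2 * ζ - τ₁) (2 * τ) := by
  have hq' : q = Complex.exp (Real.pi * Complex.I * (2 * τ)) := by rw [hq]; ring_nf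
  have hx : q₁⁻¹ * z ^ 2 = Complex.exp (2 * Real.pi * Complex.I * (2 * ζ - τ₁)) := by
    rw [hq₁, hz, ← Complex.exp_neg, ← Complex.exp_nat_mul, ← Complex.exp_add]
    push_cast
    ring_nf
  have h2τ : 0 < (2 * τ).im := by simpa using hτ
  calc _ = ∏' i : ℕ, ((1 + q ^ (2 * i + 1) * (q₁⁻¹ * z ^ 2)) *
        (1 + q ^ (2 * i + 1) * (q₁⁻¹ * z ^ 2)⁻¹)) :=
        tprod_congr fun i => by rw [mul_inv, inv_inv]; ring
    _ = jacobiTheta₂ (2 * ζ - τ₁) (2 * τ) / ∏' k : ℕ, (1 - (q ^ 2) ^ (k + 1)) := by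
        rw [hx, hq']
        exact tprod_jacobi_triple_cexp _ h2τ
    _ = _ := by
        have hq2 : q ^ 2 = Complex.exp (2 * Real.pi * Complex.I * (2 * τ)) := by
          rw [hq, ← Complex.exp_nat_mul]; ring_nf
        have hexp : Complex.exp (Real.pi * Complex.I * (2 * τ) / 12) =
            Complex.exp (Real.pi * Complex.I * τ / 6) := by ring_nf
        rw [jTheta_zero_zero, dedekindEta_eq, hexp, hq2,
          div_mul_cancel_left₀ (Complex.exp_ne_zero _), inv_mul_eq_div]
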